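/- arXiv:1310.1861 — 3 statements merged into one kernel-verified Lean document; each statement's English description precedes it below -/
import Mathlib

section
/- Let a ∈ ℝ^n have i.i.d. mean-zero Gaussian entries of variance k²/(2π), let x ∈ ℝ^n be fixed with ‖x‖ = P, let h ∈ ℝ^n have i.i.d. mean-zero Gaussian entries of variance (α/P)²/(2π) independent of a, and let e be a mean-zero Gaussian of variance α²/(2π) independent of a. Then ⟨a + h, x⟩ and ⟨a, x⟩ + e have the same distribution, namely a mean-zero Gaussian of variance ((kP)² + α²)/(2π). -/
/-!
Both random variables are sums of two independent centred Gaussians. A linear form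
`a ↦ ∑ i, a i * c i` of independent Gaussians is Gaussian with variance `∑ i, c i ^ 2 * v i`
(the characteristic function of the product measure factorises), and independent Gaussians
convolve to the Gaussian with the summed variance. Since `‖x‖ = P`, the scaled noise `h`
contributes `‖x‖² (α / P)² = α²`, exactly as much as `e` does.
-/

open MeasureTheory ProbabilityTheory Complex
open scoped NNReal

theorem MeasureTheory.Measure.map_prod_add_eq_conv {α β M : Type*} [MeasurableSpace α]
    [MeasurableSpace β] [AddMonoid M] [MeasurableSpace M] [MeasurableAdd₂ M]
    (μ : Measure α) (ν : Measure β) [SFinite μ] [SFinite ν] {f : α → M} {g : β → M}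
    (hf : Measurable f) (hg : Measurable g) :
    (μ.prod ν).map (fun p => f p.1 + g p.2) = μ.map f ∗ ν.map g := by
  rw [Measure.conv, Measure.map_prod_map _ _ hf hg,
    Measure.map_map measurable_add (hf.prodMap hg)]
  rfl

theorem map_sum_mul_pi_gaussianReal {ι : Type*} [Fintype ι] (m : ι → ℝ) (v : ι → ℝ≥0)
    (c : ι → ℝ) :
    (Measure.pi fun i => gaussianReal (m i) (v i)).map (fun a => ∑ i, a i * c i)
      = gaussianReal (∑ i, c i * m i) (∑ i, .mk (c i ^ 2) (sq_nonneg _) * v i) := by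
  refine Measure.ext_of_charFun (funext fun t => ?_)
  have hfactor (i : ι) : ∫ y, cexp (t * ↑(y * c i) * I) ∂gaussianReal (m i) (v i)
      = charFun (gaussianReal (c i * m i) (.mk (c i ^ 2) (sq_nonneg _) * v i)) t := by
    rw [← gaussianReal_map_mul_const, charFun_apply_real,
      integral_map (by fun_prop) (by fun_prop)]
  have hmeas : Measurable fun a : ι → ℝ => ∑ i, a i * c i := by fun_prop
  rw [charFun_apply_real, integral_map hmeas.aemeasurable (by fun_prop)]
  simp_rw [ofReal_sum, Finset.mul_sum, Finset.sum_mul, exp_sum]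
  rw [integral_fintype_prod_eq_prod (f := fun i y => cexp (t * ↑(y * c i) * I))]
  simp_rw [hfactor, charFun_gaussianReal, ← exp_sum]
  push_cast
  congr 1
  simp only [Finset.sum_sub_distrib, Finset.mul_sum, Finset.sum_mul, Finset.sum_div]

theorem map_sum_mul_pi_gaussianReal_zero {ι : Type*} [Fintype ι] (v : ℝ≥0) (c : ι → ℝ) :
    (Measure.pi fun _ : ι => gaussianReal 0 v).map (fun a => ∑ i, a i * c i)
      = gaussianReal 0 (.mk (∑ i, c i ^ 2) (by positivity) * v) := by
  rw [map_sum_mul_pi_gaussianReal]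
  congr
  · simp
  · ext
    simp only [NNReal.coe_sum, NNReal.coe_mul, NNReal.coe_mk, Finset.sum_mul]

theorem map_sum_add_mul_prod_pi_gaussianReal {ι : Type*} [Fintype ι] (v w : ℝ≥0) (c : ι → ℝ) :
    ((Measure.pi fun _ : ι => gaussianReal 0 v).prod
        (Measure.pi fun _ : ι => gaussianReal 0 w)).map (fun p => ∑ i, (p.1 i + p.2 i) * c i)
      = gaussianReal 0
          (.mk (∑ i, c i ^ 2) (by positivity) * v + .mk (∑ i, c i ^ 2) (by positivity) * w) := by
  have hsplit : (fun p : (ι → ℝ) × (ι → ℝ) => ∑ i, (p.1 i + p.2 i) * c i)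
      = fun p => ∑ i, p.1 i * c i + ∑ i, p.2 i * c i := by
    simp only [add_mul, Finset.sum_add_distrib]
  have hform : Measurable fun a : ι → ℝ => ∑ i, a i * c i := by fun_prop
  rw [hsplit, Measure.map_prod_add_eq_conv _ _ hform hform, map_sum_mul_pi_gaussianReal_zero,
    map_sum_mul_pi_gaussianReal_zero, gaussianReal_conv_gaussianReal, add_zero]

theorem map_sum_mul_add_prod_pi_gaussianReal {ι : Type*} [Fintype ι] (v w : ℝ≥0) (c : ι → ℝ) :
    ((Measure.pi fun _ : ι => gaussianReal 0 v).prod (gaussianReal 0 w)).map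
        (fun p => ∑ i, p.1 i * c i + p.2)
      = gaussianReal 0 (.mk (∑ i, c i ^ 2) (by positivity) * v + w) := by
  have hform : Measurable fun a : ι → ℝ => ∑ i, a i * c i := by fun_prop
  refine (Measure.map_prod_add_eq_conv _ _ hform measurable_id).trans ?_
  rw [Measure.map_id, map_sum_mul_pi_gaussianReal_zero, gaussianReal_conv_gaussianReal, add_zero]

/-- With `a ~ Ψ_k^n`, `h ~ Ψ_{α/P}^n`, `e ~ Ψ_α` independent and `‖x‖ = P`,
the random variables `⟨a + h, x⟩` and `⟨a, x⟩ + e` have the same distribution,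
namely the mean-zero Gaussian of variance `((kP)² + α²)/(2π)`. -/
theorem stmt_6 {n : ℕ} (k α P : ℝ) (hP : 0 < P)
    (x : Fin n → ℝ) (hx : Real.sqrt (∑ i, x i ^ 2) = P) :
    Measure.map (fun p : (Fin n → ℝ) × (Fin n → ℝ) => ∑ i, (p.1 i + p.2 i) * x i)
        ((Measure.pi fun _ : Fin n =>
            gaussianReal 0 ⟨k ^ 2 / (2 * Real.pi), by positivity⟩).prod
          (Measure.pi fun _ : Fin n =>
            gaussianReal 0 ⟨(α / P) ^ 2 / (2 * Real.pi), by positivity⟩))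
      = gaussianReal 0 ⟨((k * P) ^ 2 + α ^ 2) / (2 * Real.pi), by positivity⟩ ∧
    Measure.map (fun p : (Fin n → ℝ) × ℝ => (∑ i, p.1 i * x i) + p.2)
        ((Measure.pi fun _ : Fin n =>
            gaussianReal 0 ⟨k ^ 2 / (2 * Real.pi), by positivity⟩).prod
          (gaussianReal 0 ⟨α ^ 2 / (2 * Real.pi), by positivity⟩))
      = gaussianReal 0 ⟨((k * P) ^ 2 + α ^ 2) / (2 * Real.pi), by positivity⟩ := by
  have hnorm : ∑ i, x i ^ 2 = P ^ 2 := by rw [← hx, Real.sq_sqrt (by positivity)]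
  have hvar₁ : (∑ i, x i ^ 2) * (k ^ 2 / (2 * Real.pi))
        + (∑ i, x i ^ 2) * ((α / P) ^ 2 / (2 * Real.pi))
      = ((k * P) ^ 2 + α ^ 2) / (2 * Real.pi) := by
    rw [hnorm]
    field_simp
  have hvar₂ : (∑ i, x i ^ 2) * (k ^ 2 / (2 * Real.pi)) + α ^ 2 / (2 * Real.pi)
      = ((k * P) ^ 2 + α ^ 2) / (2 * Real.pi) := by
    rw [hnorm]
    ring
  exact ⟨(map_sum_add_mul_prod_pi_gaussianReal _ _ x).trans (congrArg _ (NNReal.eq hvar₁)),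
    (map_sum_mul_add_prod_pi_gaussianReal _ _ x).trans (congrArg _ (NNReal.eq hvar₂))⟩
end

section
/- For any 0 < β < α ≤ 2β, the total variational distance between the mean-zero Gaussian distributions with standard deviations α/√(2π) and β/√(2π) satisfies Δ(Ψ_α, Ψ_β) ≤ 9(α/β − 1). -/
/-!
Write `e_s(x) = exp(-πx²/s²)`, so that `Ψ_s = e_s / s` and `∫ e_s = s`. Splitting
`e_α/α - e_β/β = (1/α - 1/β) e_α + (e_α - e_β)/β` and using `e_β ≤ e_α` (as `β < α`) gives
`2Δ(Ψ_α, Ψ_β) ≤ (1/β - 1/α) α + (α - β)/β = 2(α/β - 1)`.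
-/

open MeasureTheory Real

lemma integral_abs_mul_sub_mul_le {Ω : Type*} [MeasurableSpace Ω] {μ : Measure Ω}
    {f g : Ω → ℝ} (hf : Integrable f μ) (hg : Integrable g μ) (a b : ℝ) :
    ∫ x, |a * f x - b * g x| ∂μ ≤ |a - b| * (∫ x, |f x| ∂μ) + |b| * ∫ x, |f x - g x| ∂μ := by
  have hfg : Integrable (fun x => |f x - g x|) μ := (hf.sub hg).abs
  rw [← integral_const_mul, ← integral_const_mul,
    ← integral_add (hf.abs.const_mul _) (hfg.const_mul _)]
  refine integral_mono ((hf.const_mul a).sub (hg.const_mul b)).abs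
    ((hf.abs.const_mul _).add (hfg.const_mul _)) fun x => ?_
  calc |a * f x - b * g x| = |(a - b) * f x + b * (f x - g x)| := by ring_nf
    _ ≤ |a - b| * |f x| + |b| * |f x - g x| := by
      rw [← abs_mul, ← abs_mul]; exact abs_add_le _ _

lemma integrable_exp_neg_pi_mul_sq_div_sq {s : ℝ} (hs : s ≠ 0) :
    Integrable fun x : ℝ => exp (-π * x ^ 2 / s ^ 2) := by
  simp_rw [fun x : ℝ => show -π * x ^ 2 / s ^ 2 = -(π / s ^ 2) * x ^ 2 by ring]
  exact integrable_exp_neg_mul_sq (by positivity)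

lemma integral_exp_neg_pi_mul_sq_div_sq {s : ℝ} (hs : 0 < s) :
    ∫ x : ℝ, exp (-π * x ^ 2 / s ^ 2) = s := by
  simp_rw [fun x : ℝ => show -π * x ^ 2 / s ^ 2 = -(π / s ^ 2) * x ^ 2 by ring]
  rw [integral_gaussian, div_div_cancel₀ pi_ne_zero, sqrt_sq hs.le]

lemma exp_neg_pi_mul_sq_div_sq_le {s t : ℝ} (hs : 0 < s) (hst : s ≤ t) (x : ℝ) :
    exp (-π * x ^ 2 / s ^ 2) ≤ exp (-π * x ^ 2 / t ^ 2) := by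
  rw [exp_le_exp, neg_mul, neg_div, neg_div, neg_le_neg_iff]
  gcongr

lemma integral_abs_exp_neg_pi_mul_sq_div_sq_sub {s t : ℝ} (hs : 0 < s) (hst : s ≤ t) :
    ∫ x : ℝ, |exp (-π * x ^ 2 / t ^ 2) - exp (-π * x ^ 2 / s ^ 2)| = t - s := by
  have ht : 0 < t := hs.trans_le hst
  simp_rw [abs_of_nonneg (sub_nonneg.2 (exp_neg_pi_mul_sq_div_sq_le hs hst _))]
  rw [integral_sub (integrable_exp_neg_pi_mul_sq_div_sq ht.ne')
    (integrable_exp_neg_pi_mul_sq_div_sq hs.ne'), integral_exp_neg_pi_mul_sq_div_sq ht,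
    integral_exp_neg_pi_mul_sq_div_sq hs]

theorem stmt_7_general (α β : ℝ) (hβ : 0 < β) (hβα : β < α) :
    (1 / 2) * ∫ x : ℝ,
        |(1 / α) * Real.exp (-Real.pi * x ^ 2 / α ^ 2) -
          (1 / β) * Real.exp (-Real.pi * x ^ 2 / β ^ 2)|
      ≤ 9 * (α / β - 1) := by
  have hα : 0 < α := hβ.trans hβα
  have hratio : 0 ≤ α / β - 1 := by rw [sub_nonneg, one_le_div hβ]; exact hβα.le
  calc _ ≤ (1 / 2) * (|1 / α - 1 / β| * (∫ x : ℝ, |exp (-π * x ^ 2 / α ^ 2)|)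
        + |1 / β| * ∫ x : ℝ, |exp (-π * x ^ 2 / α ^ 2) - exp (-π * x ^ 2 / β ^ 2)|) := by
        gcongr
        exact integral_abs_mul_sub_mul_le (integrable_exp_neg_pi_mul_sq_div_sq hα.ne')
          (integrable_exp_neg_pi_mul_sq_div_sq hβ.ne') _ _
    _ = α / β - 1 := by
        simp_rw [abs_of_pos (exp_pos _)]
        rw [integral_exp_neg_pi_mul_sq_div_sq hα,
          integral_abs_exp_neg_pi_mul_sq_div_sq_sub hβ hβα.le,
          abs_of_nonpos (by rw [sub_nonpos]; exact one_div_le_one_div_of_le hβ hβα.le),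
          abs_of_pos (one_div_pos.2 hβ)]
        field_simp
        ring
    _ ≤ 9 * (α / β - 1) := by linarith

/-- For `0 < β < α ≤ 2β`, the total variational distance between the mean-zero
Gaussians with standard deviations `α/√(2π)` and `β/√(2π)` (whose densities are
`x ↦ (1/s)·exp(−πx²/s²)`) satisfies `Δ(Ψ_α, Ψ_β) ≤ 9(α/β − 1)`. -/
theorem stmt_7 (α β : ℝ) (hβ : 0 < β) (hβα : β < α) (hα2β : α ≤ 2 * β) :
    (1 / 2) * ∫ x : ℝ,
        |(1 / α) * Real.exp (-Real.pi * x ^ 2 / α ^ 2) -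
          (1 / β) * Real.exp (-Real.pi * x ^ 2 / β ^ 2)|
      ≤ 9 * (α / β - 1) :=
  stmt_7_general α β hβ hβα
end

section
/- For any n-dimensional full-rank lattice L, the smoothing parameter satisfies η_ε(L) ≤ √n / λ₁(L*) where ε = 2^{-n}; that is, if s ≥ √n / λ₁(L*) then Σ_{y ∈ L* \ {0}} exp(−π s² ‖y‖²) ≤ 2^{-n}. -/
/-!
Nonzero dual vectors have norm at least `λ₁` and are pairwise `λ₁` apart, so a volume
comparison of disjoint balls shows that the shell `k λ₁ ≤ ‖y‖ < (k + 1) λ₁` holds at most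
`(2k + 3)ⁿ` of them. For `s ≥ √n / λ₁` each of these contributes at most `exp (-π k²)ⁿ`, and
`(2k + 3) exp (-π k²) ≤ 2^-(k+1)`, so shell `k` contributes at most `2⁻ⁿ 2⁻ᵏ`; summing over
`k ≥ 1` gives `2⁻ⁿ`.
-/

open Matrix Finset Metric MeasureTheory Module Real
open scoped ENNReal

/-- The balls of radius `δ / 2` around the points are disjoint and lie in `ball 0 (R + δ / 2)`. -/
theorem card_le_of_le_dist {E : Type*} [NormedAddCommGroup E] [NormedSpace ℝ E]
    [FiniteDimensional ℝ E] {ι : Type*} (S : Finset ι) (v : ι → E) {δ R : ℝ} (hδ : 0 < δ)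
    (hR : 0 ≤ R) (hsep : ∀ i ∈ S, ∀ j ∈ S, i ≠ j → δ ≤ dist (v i) (v j))
    (hnorm : ∀ i ∈ S, ‖v i‖ ≤ R) :
    (#S : ℝ) ≤ (2 * R / δ + 1) ^ finrank ℝ E := by
  borelize E
  set μ : Measure E := Measure.addHaar
  set d := finrank ℝ E
  set r := δ / 2
  have hr : 0 < r := by positivity
  have hdisj : (S : Set ι).PairwiseDisjoint fun i => ball (v i) r := fun i hi j hj hij =>
    ball_disjoint_ball ((add_halves δ).trans_le (hsep i hi j hj hij))
  have hunion : ⋃ i ∈ S, ball (v i) r ⊆ ball 0 (R + r) := by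
    refine Set.iUnion₂_subset fun i hi => ball_subset_ball' ?_
    simpa [add_comm r] using hnorm i hi
  have hvol : (#S : ℝ≥0∞) * ENNReal.ofReal (r ^ d) * μ (ball 0 1)
      ≤ ENNReal.ofReal ((R + r) ^ d) * μ (ball 0 1) :=
    calc (#S : ℝ≥0∞) * ENNReal.ofReal (r ^ d) * μ (ball 0 1)
        = ∑ i ∈ S, μ (ball (v i) r) := by
          simp [Measure.addHaar_ball_of_pos μ _ hr, mul_assoc, d]
      _ = μ (⋃ i ∈ S, ball (v i) r) :=
          (measure_biUnion_finset hdisj fun _ _ => measurableSet_ball).symm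
      _ ≤ μ (ball 0 (R + r)) := measure_mono hunion
      _ = ENNReal.ofReal ((R + r) ^ d) * μ (ball 0 1) :=
          Measure.addHaar_ball_of_pos μ _ (by positivity)
  have hreal : (#S : ℝ) * r ^ d ≤ (R + r) ^ d := by
    rwa [ENNReal.mul_le_mul_iff_left (measure_ball_pos μ 0 one_pos).ne' measure_ball_lt_top.ne,
      ← ENNReal.ofReal_natCast, ← ENNReal.ofReal_mul (by positivity),
      ENNReal.ofReal_le_ofReal_iff (by positivity)] at hvol
  calc (#S : ℝ) ≤ (R + r) ^ d / r ^ d := (le_div_iff₀ (by positivity)).mpr hreal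
    _ = (2 * R / δ + 1) ^ d := by rw [← div_pow]; congr 1; field_simp; ring

theorem exp_neg_three_le : exp (-3) ≤ 20⁻¹ := by
  have he : (2.7182818283 : ℝ) ^ 3 < exp 1 ^ 3 :=
    pow_lt_pow_left₀ exp_one_gt_d9 (by norm_num) (by norm_num)
  have h3 : exp 3 = exp 1 ^ 3 := by rw [← exp_nat_mul]; norm_num
  rw [exp_neg]
  exact inv_anti₀ (by norm_num) (by norm_num at he; linarith)

theorem two_mul_add_three_mul_exp_neg_pi_mul_sq_le {k : ℕ} (hk : 1 ≤ k) :
    (2 * k + 3) * exp (-π * k ^ 2) ≤ 2⁻¹ ^ (k + 1) := by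
  have hk' : (1 : ℝ) ≤ k := by exact_mod_cast hk
  have hexp : exp (-π * k ^ 2) ≤ 20⁻¹ ^ k :=
    calc exp (-π * k ^ 2) ≤ exp (k * -3) := exp_le_exp.mpr (by nlinarith [pi_gt_three])
      _ = exp (-3) ^ k := exp_nat_mul _ k
      _ ≤ 20⁻¹ ^ k := pow_le_pow_left₀ (exp_pos _).le exp_neg_three_le k
  have hlin : 2 * (2 * k + 3) ≤ (10 : ℝ) ^ k := by
    have := one_add_mul_le_pow (a := (9 : ℝ)) (by norm_num) k
    norm_num at this
    linarith
  calc (2 * k + 3) * exp (-π * k ^ 2) ≤ (2 * k + 3) * 20⁻¹ ^ k := by gcongr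
    _ ≤ 10 ^ k / 2 * 20⁻¹ ^ k := by gcongr; linarith
    _ = 2⁻¹ ^ (k + 1) := by rw [pow_succ, div_mul_eq_mul_div, ← mul_pow]; norm_num; ring

theorem two_mul_add_three_mul_exp_neg_pi_mul_sq_pow_le {k d : ℕ} (hk : 1 ≤ k) (hd : 1 ≤ d) :
    ((2 * k + 3) * exp (-π * k ^ 2)) ^ d ≤ 2⁻¹ ^ d * 2⁻¹ ^ k :=
  calc ((2 * k + 3) * exp (-π * k ^ 2)) ^ d ≤ (2⁻¹ ^ (k + 1)) ^ d := by
        gcongr; exact two_mul_add_three_mul_exp_neg_pi_mul_sq_le hk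
    _ = 2⁻¹ ^ d * 2⁻¹ ^ (k * d) := by ring
    _ ≤ 2⁻¹ ^ d * 2⁻¹ ^ k := by
        gcongr 2⁻¹ ^ d * ?_
        exact pow_le_pow_of_le_one (by norm_num) (by norm_num) (Nat.le_mul_of_pos_right k hd)

theorem sum_inv_two_pow_le_one {T : Finset ℕ} (hT : ∀ k ∈ T, 1 ≤ k) :
    ∑ k ∈ T, (2 : ℝ)⁻¹ ^ k ≤ 1 :=
  calc ∑ k ∈ T, (2 : ℝ)⁻¹ ^ k = ∑ k ∈ T, if 1 ≤ k then (2 : ℝ)⁻¹ ^ k else 0 :=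
        sum_congr rfl fun k hk => (if_pos (hT k hk)).symm
    _ ≤ ∑' k, if 1 ≤ k then (2 : ℝ)⁻¹ ^ k else 0 := by
        refine Summable.sum_le_tsum _ (fun k _ => by positivity) ?_
        refine (summable_geometric_of_lt_one (r := (2 : ℝ)⁻¹) (by norm_num) (by norm_num))
          |>.of_nonneg_of_le (fun k => by positivity) fun k => ?_
        split_ifs <;> simp
    _ = 1 := by rw [tsum_geometric_inv_two_ge]; norm_num

theorem exp_neg_pi_mul_sq_mul_sq_le {d k : ℕ} {lam s r : ℝ} (hlam : 0 < lam)
    (hs : √d / lam ≤ s) (hr : k * lam ≤ r) :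
    exp (-π * s ^ 2 * r ^ 2) ≤ exp (-π * k ^ 2) ^ d := by
  have hs2 : d / lam ^ 2 ≤ s ^ 2 := by
    simpa [div_pow] using pow_le_pow_left₀ (by positivity) hs 2
  have : d * (k : ℝ) ^ 2 ≤ s ^ 2 * r ^ 2 :=
    calc d * (k : ℝ) ^ 2 = d / lam ^ 2 * (k * lam) ^ 2 := by field_simp
      _ ≤ s ^ 2 * r ^ 2 := by gcongr
  rw [← exp_nat_mul, exp_le_exp]
  nlinarith [pi_pos]

theorem tsum_exp_neg_pi_mul_sq_mul_norm_sq_le_of_le_dist {E : Type*} [NormedAddCommGroup E]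
    [NormedSpace ℝ E] [FiniteDimensional ℝ E] (hE : 0 < finrank ℝ E) {ι : Type*} (v : ι → E)
    {lam s : ℝ} (hlam : 0 < lam) (hnorm : ∀ i, lam ≤ ‖v i‖)
    (hsep : Pairwise fun i j => lam ≤ dist (v i) (v j)) (hs : √(finrank ℝ E) / lam ≤ s) :
    ∑' i, exp (-π * s ^ 2 * ‖v i‖ ^ 2) ≤ 2⁻¹ ^ finrank ℝ E := by
  classical
  set d := finrank ℝ E
  set K : ι → ℕ := fun i => ⌊‖v i‖ / lam⌋₊
  have hK_pos : ∀ i, 1 ≤ K i := fun i =>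
    Nat.one_le_floor_iff _ |>.mpr <| (le_div_iff₀ hlam).mpr (by simpa using hnorm i)
  have hK_le : ∀ i, K i * lam ≤ ‖v i‖ := fun i =>
    (le_div_iff₀ hlam).mp (Nat.floor_le (by positivity))
  have hK_lt : ∀ i, ‖v i‖ ≤ (K i + 1) * lam := fun i =>
    (div_le_iff₀ hlam).mp (Nat.lt_floor_add_one _).le
  have hshell : ∀ S : Finset ι, ∀ k, (#{i ∈ S | K i = k} : ℝ) ≤ (2 * k + 3) ^ d := by
    intro S k
    refine (card_le_of_le_dist _ v hlam (by positivity) (fun i _ j _ hij => hsep hij)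
      (R := (k + 1) * lam) fun i hi => ?_).trans_eq (by field_simp; ring)
    simpa [(mem_filter.mp hi).2] using hK_lt i
  refine tsum_le_of_sum_le' (by positivity) fun S => ?_
  calc ∑ i ∈ S, exp (-π * s ^ 2 * ‖v i‖ ^ 2)
      ≤ ∑ i ∈ S, exp (-π * K i ^ 2) ^ d :=
        sum_le_sum fun i _ => exp_neg_pi_mul_sq_mul_sq_le hlam hs (hK_le i)
    _ = ∑ k ∈ S.image K, #{i ∈ S | K i = k} • exp (-π * k ^ 2) ^ d :=
        sum_comp (fun k : ℕ => exp (-π * k ^ 2) ^ d) K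
    _ ≤ ∑ k ∈ S.image K, 2⁻¹ ^ d * 2⁻¹ ^ k := by
        refine sum_le_sum fun k hk => ?_
        obtain ⟨i, -, rfl⟩ := mem_image.mp hk
        rw [nsmul_eq_mul]
        calc _ ≤ (2 * K i + 3 : ℝ) ^ d * exp (-π * K i ^ 2) ^ d := by
              gcongr; exact hshell S _
          _ ≤ 2⁻¹ ^ d * 2⁻¹ ^ K i := by
              rw [← mul_pow]; exact two_mul_add_three_mul_exp_neg_pi_mul_sq_pow_le (hK_pos i) hE
    _ ≤ 2⁻¹ ^ d := by
        rw [← mul_sum]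
        refine mul_le_of_le_one_right (by positivity) (sum_inv_two_pow_le_one ?_)
        simp only [mem_image]
        rintro k ⟨i, -, rfl⟩
        exact hK_pos i

theorem AddMonoidHom.tsum_exp_neg_pi_mul_sq_mul_norm_sq_le {E : Type*} [NormedAddCommGroup E]
    [NormedSpace ℝ E] [FiniteDimensional ℝ E] (hE : 0 < finrank ℝ E) {G : Type*} [AddGroup G]
    (f : G →+ E) {lam s : ℝ} (hlam : 0 < lam) (hf : ∀ z ≠ 0, lam ≤ ‖f z‖)
    (hs : √(finrank ℝ E) / lam ≤ s) :
    ∑' z : {z : G // z ≠ 0}, exp (-π * s ^ 2 * ‖f z‖ ^ 2) ≤ 2⁻¹ ^ finrank ℝ E :=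
  tsum_exp_neg_pi_mul_sq_mul_norm_sq_le_of_le_dist hE _ hlam (fun z => hf z z.2)
    (fun z z' hzz' => by
      show lam ≤ dist (f z) (f z')
      rw [dist_eq_norm, ← map_sub]
      exact hf _ (sub_ne_zero.mpr (Subtype.coe_ne_coe.mpr hzz'))) hs

theorem stmt_8_general {n : ℕ} (hn : 0 < n) (A : Matrix (Fin n) (Fin n) ℝ)
    (lam1 : ℝ) (hpos : 0 < lam1)
    (hlam : ∀ z : Fin n → ℤ, z ≠ 0 →
      lam1 ≤ Real.sqrt (∑ i, ((Aᵀ)⁻¹.mulVec (fun j => (z j : ℝ))) i ^ 2))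
    (s : ℝ) (hs : Real.sqrt n / lam1 ≤ s) :
    ∑' z : {z : Fin n → ℤ // z ≠ 0},
        Real.exp (-Real.pi * s ^ 2 *
          ∑ i, ((Aᵀ)⁻¹.mulVec (fun j => (z.1 j : ℝ))) i ^ 2)
      ≤ 2 ^ (-(n : ℝ)) := by
  let f : (Fin n → ℤ) →+ EuclideanSpace ℝ (Fin n) :=
    AddMonoidHom.mk' (fun z => WithLp.toLp 2 ((Aᵀ)⁻¹ *ᵥ fun j => (z j : ℝ)))
      fun z z' => by rw [← WithLp.toLp_add, ← mulVec_add]; congr 2; ext; simp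
  have hf : ∀ z, ‖f z‖ = √(∑ i, ((Aᵀ)⁻¹ *ᵥ fun j => (z j : ℝ)) i ^ 2) := fun z => by
    simp [f, EuclideanSpace.norm_eq]
  have h := f.tsum_exp_neg_pi_mul_sq_mul_norm_sq_le (by simpa using hn) hpos
    (fun z hz => (hf z).symm ▸ hlam z hz) (by simpa using hs)
  simp only [hf, sq_sqrt (sum_nonneg fun _ _ => sq_nonneg _), finrank_euclideanSpace_fin] at h
  rwa [rpow_neg zero_le_two, rpow_natCast, ← inv_pow]

/-- Smoothing parameter bound (Micciancio–Regev): for an `n`-dimensional full-rank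
lattice `L(A)` with dual `L((Aᵀ)⁻¹)`, if `λ₁` is a positive lower bound on the norms
of nonzero dual vectors and `s ≥ √n / λ₁`, then the dual Gaussian mass
`Σ_{y ∈ L* \ {0}} exp(−π s² ‖y‖²)` is at most `2^{-n}`. -/
theorem stmt_8 {n : ℕ} (hn : 0 < n) (A : Matrix (Fin n) (Fin n) ℝ) (hA : IsUnit A.det)
    (lam1 : ℝ) (hpos : 0 < lam1)
    (hlam : ∀ z : Fin n → ℤ, z ≠ 0 →
      lam1 ≤ Real.sqrt (∑ i, ((Aᵀ)⁻¹.mulVec (fun j => (z j : ℝ))) i ^ 2))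
    (s : ℝ) (hs : Real.sqrt n / lam1 ≤ s) :
    ∑' z : {z : Fin n → ℤ // z ≠ 0},
        Real.exp (-Real.pi * s ^ 2 *
          ∑ i, ((Aᵀ)⁻¹.mulVec (fun j => (z.1 j : ℝ))) i ^ 2)
      ≤ 2 ^ (-(n : ℝ)) :=
  stmt_8_general hn A lam1 hpos hlam s hs
end
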